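/- Let A be a complete normed ring (Banach algebra) over ℝ with 1. Let PG denote the set of differentiable maps p : ℝ → A all of whose values are units, with p(0) = 1 and whose logarithmic derivative t ↦ p(t)⁻¹·p′(t) is 2π-periodic. Suppose p₁, p₂ ∈ PG and g is a unit of A with p₂(2π) = g⁻¹·p₁(2π)·g. Then the map γ : ℝ → A defined by γ(θ) = (g⁻¹·p₁(θ)·g)⁻¹·p₂(θ) is differentiable with unit values, satisfies γ(0) = 1, γ(2π) = 1, is 2π-periodic, and g⁻¹·p₁(θ)·g·γ(θ) = p₂(θ) for all θ. -/

import Mathlib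

/-!
A path with `T`-periodic logarithmic derivative and `p 0 = 1` satisfies `p (θ + T) = p T * p θ`,
since `θ ↦ p (θ + T) * (p θ)⁻¹` has zero derivative. The conjugate `c = g⁻¹ p₁ g` inherits this
rule, so once `c (2π) = p₂ (2π)` the factors `c (2π)` cancel in `c (θ + 2π)⁻¹ p₂ (θ + 2π)`, and
`γ = c⁻¹ p₂` is periodic.
-/

open Real

variable (A : Type*) [NormedRing A] [NormedAlgebra ℝ A] [CompleteSpace A]

/-- Membership in the path space `PG`: differentiable unit-valued maps `p : ℝ → A` with
`p 0 = 1` whose logarithmic derivative `t ↦ p t ⁻¹ * p' t` is `2π`-periodic. -/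
def MemPG (p : ℝ → A) : Prop :=
  Differentiable ℝ p ∧ (∀ t, IsUnit (p t)) ∧ p 0 = 1 ∧
    Function.Periodic (fun t => Ring.inverse (p t) * deriv p t) (2 * π)

section LogDeriv

variable {𝕜 R : Type*} [RCLike 𝕜] [NormedRing R] [NormedAlgebra 𝕜 R] [CompleteSpace R]

noncomputable def leftLogDeriv (p : 𝕜 → R) (t : 𝕜) : R :=
  Ring.inverse (p t) * deriv p t

theorem HasDerivAt.ringInverse {p : 𝕜 → R} {p' : R} {t : 𝕜} (hp : HasDerivAt p p' t)
    (hu : IsUnit (p t)) :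
    HasDerivAt (fun s => Ring.inverse (p s))
      (-(Ring.inverse (p t) * p' * Ring.inverse (p t))) t := by
  obtain ⟨u, hu⟩ := hu
  have h := hasFDerivAt_ringInverse (𝕜 := 𝕜) u
  rw [hu] at h
  simpa [← hu, Function.comp_def] using h.comp_hasDerivAt t hp

theorem mul_ringInverse_eq_of_deriv_eq_mul_leftLogDeriv {p q : 𝕜 → R}
    (hp : Differentiable 𝕜 p) (hpu : ∀ t, IsUnit (p t)) (hq : Differentiable 𝕜 q)
    (hode : ∀ t, deriv q t = q t * leftLogDeriv p t) (s t : 𝕜) :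
    q s * Ring.inverse (p s) = q t * Ring.inverse (p t) := by
  have hderiv : ∀ t, HasDerivAt (fun s => q s * Ring.inverse (p s)) 0 t := by
    intro t
    refine ((hq t).hasDerivAt.mul ((hp t).hasDerivAt.ringInverse (hpu t))).congr_deriv ?_
    rw [hode, leftLogDeriv]
    noncomm_ring
  exact is_const_of_deriv_eq_zero (fun t => (hderiv t).differentiableAt)
    (fun t => (hderiv t).deriv) s t

theorem apply_add_eq_mul_of_periodic_leftLogDeriv {p : 𝕜 → R} {T : 𝕜}
    (hp : Differentiable 𝕜 p) (hpu : ∀ t, IsUnit (p t)) (hp0 : p 0 = 1)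
    (hper : Function.Periodic (leftLogDeriv p) T) (θ : 𝕜) :
    p (θ + T) = p T * p θ := by
  have hshift : Differentiable 𝕜 (fun t => p (t + T)) := hp.comp (differentiable_id.add_const T)
  have hode : ∀ t, deriv (fun s => p (s + T)) t = p (t + T) * leftLogDeriv p t := by
    intro t
    rw [deriv_comp_add_const, ← hper t, leftLogDeriv,
      Ring.mul_inverse_cancel_left _ _ (hpu (t + T))]
  have h := mul_ringInverse_eq_of_deriv_eq_mul_leftLogDeriv hp hpu hshift hode θ 0
  rw [zero_add, hp0, Ring.inverse_one, mul_one] at h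
  rw [← h, Ring.inverse_mul_cancel_right _ _ (hpu θ)]

end LogDeriv

theorem periodic_ringInverse_mul {α M₀ : Type*} [Add α] [MonoidWithZero M₀]
    {c p : α → M₀} {T : α} (hcT : IsUnit (c T)) (hc : ∀ θ, c (θ + T) = c T * c θ)
    (hp : ∀ θ, p (θ + T) = p T * p θ) (hend : p T = c T) :
    Function.Periodic (fun θ => Ring.inverse (c θ) * p θ) T := by
  intro θ
  simp only [hc, hp, hend, Ring.inverse_mul (Or.inl hcT), mul_assoc,
    Ring.inverse_mul_cancel_left _ _ hcT]

/-- If `p₁, p₂ ∈ PG` and `g` is a unit with `p₂(2π) = g⁻¹ p₁(2π) g`, then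
`γ = (g⁻¹ p₁ g)⁻¹ p₂` is a based loop (differentiable, unit-valued, `γ(0) = γ(2π) = 1`,
`2π`-periodic) with `g⁻¹ p₁ g γ = p₂`.  This is the injectivity step in identifying
`BLG` with `G ×_G EG`. -/
theorem based_loop_of_same_endpoint (p₁ p₂ : ℝ → A) (hp₁ : MemPG A p₁) (hp₂ : MemPG A p₂)
    (g : Aˣ) (hend : p₂ (2 * π) = ↑g⁻¹ * p₁ (2 * π) * ↑g)
    (γ : ℝ → A) (hγ : ∀ θ, γ θ = Ring.inverse (↑g⁻¹ * p₁ θ * ↑g) * p₂ θ) :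
    Differentiable ℝ γ ∧ (∀ θ, IsUnit (γ θ)) ∧ γ 0 = 1 ∧ γ (2 * π) = 1 ∧
      Function.Periodic γ (2 * π) ∧ ∀ θ, ↑g⁻¹ * p₁ θ * ↑g * γ θ = p₂ θ := by
  obtain ⟨hd₁, hu₁, h0₁, hper₁⟩ := hp₁
  obtain ⟨hd₂, hu₂, h0₂, hper₂⟩ := hp₂
  set c : ℝ → A := fun θ => ↑g⁻¹ * p₁ θ * ↑g with hc
  have hcd : Differentiable ℝ c := (hd₁.const_mul _).mul_const _
  have hcu : ∀ θ, IsUnit (c θ) := fun θ => (g⁻¹.isUnit.mul (hu₁ θ)).mul g.isUnit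
  have hc_add : ∀ θ, c (θ + 2 * π) = c (2 * π) * c θ := fun θ => by
    simp [hc, apply_add_eq_mul_of_periodic_leftLogDeriv hd₁ hu₁ h0₁ hper₁ θ, mul_assoc]
  have hp₂_add := apply_add_eq_mul_of_periodic_leftLogDeriv hd₂ hu₂ h0₂ hper₂
  obtain rfl : γ = fun θ => Ring.inverse (c θ) * p₂ θ := funext hγ
  exact ⟨(hcd.inverse hcu).mul hd₂, fun θ => (hcu θ).ringInverse.mul (hu₂ θ),
    by simp [hc, h0₁, h0₂], by beta_reduce; rw [hend]; exact Ring.inverse_mul_cancel _ (hcu _),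
    periodic_ringInverse_mul (hcu _) hc_add hp₂_add hend,
    fun θ => Ring.mul_inverse_cancel_left _ _ (hcu θ)⟩
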